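/- arXiv:1008.3213 — 3 statements merged into one kernel-verified Lean document; each statement's English description precedes it below -/
import Mathlib

section
/- Let G be a finite simple graph with probability weights μ. If there exists an independent set I with μ(I) > μ(N(I)), then the limit as n → ∞ of the maximum product-measure of an independent set in G^n equals 1. -/
/-!
Let `g = 1_I - 1_{N(I)}`. If `x ~ y` in `G^n` then `g (x i) + g (y i) ≤ 0` in every coordinate,
since `x i ∈ I` forces `y i ∈ N(I)` and vice versa; hence the tuples with `∑ i, g (x i) > 0` form
an independent set of `G^n`. Under the product measure the `g (x i)` are i.i.d. with mean
`μ(I) - μ(N(I)) > 0`, so by Chebyshev's inequality this set has measure at least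
`1 - Var[g] / (n E[g]²) → 1`, while `ᾱ(G^n) ≤ 1` always.
-/

open Finset Filter

/-- `I` is an independent set of vertices in `G`. -/
def IsIndepSet {V : Type*} (G : SimpleGraph V) (I : Finset V) : Prop :=
  ∀ u ∈ I, ∀ v ∈ I, ¬ G.Adj u v

/-- The neighborhood `N(I)`: vertices adjacent to at least one vertex of `I`. -/
noncomputable def nbhd {V : Type*} [Fintype V] (G : SimpleGraph V) (I : Finset V) : Finset V :=
  @Finset.filter _ (fun v => ∃ u ∈ I, G.Adj u v) (Classical.decPred _) Finset.univ

/-- Measure of a finite set of vertices: sum of the weights. -/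
def fmeas {V : Type*} (μ : V → ℝ) (S : Finset V) : ℝ := ∑ v ∈ S, μ v

/-- The `n`-fold tensor (categorical) power of `G`. -/
def tpow {V : Type*} (G : SimpleGraph V) (n : ℕ) : SimpleGraph (Fin n → V) where
  Adj u v := u ≠ v ∧ ∀ i, G.Adj (u i) (v i)
  symm := ⟨fun u v h => ⟨h.1.symm, fun i => (h.2 i).symm⟩⟩
  loopless := ⟨fun u h => h.1 rfl⟩

/-- Product measure of a set of `n`-tuples. -/
noncomputable def pmeas {V : Type*} (μ : V → ℝ) (n : ℕ) (S : Finset (Fin n → V)) : ℝ :=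
  ∑ x ∈ S, ∏ i, μ (x i)

/-- `ᾱ(G)`: the supremum (= maximum) of the measures of independent sets of `G`. -/
noncomputable def alphaBar {V : Type*} (G : SimpleGraph V) (μ : V → ℝ) : ℝ :=
  sSup {x : ℝ | ∃ I : Finset V, IsIndepSet G I ∧ x = fmeas μ I}

/-- `ᾱ(G^n)` with the product measure. -/
noncomputable def alphaPow {V : Type*} (G : SimpleGraph V) (μ : V → ℝ) (n : ℕ) : ℝ :=
  alphaBar (tpow G n) (fun x => ∏ i, μ (x i))

open MeasureTheory ProbabilityTheory

section IndependentSets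

variable {V : Type*} [Fintype V] (G : SimpleGraph V)

noncomputable def nbhdExcess (I : Finset V) (v : V) : ℝ :=
  (I : Set V).indicator 1 v - (nbhd G I : Set V).indicator 1 v

lemma mem_nbhd_of_adj {I : Finset V} {u v : V} (hu : u ∈ I) (huv : G.Adj u v) : v ∈ nbhd G I := by
  simpa [nbhd] using ⟨u, hu, huv⟩

lemma nbhdExcess_add_nonpos_of_adj (I : Finset V) {u v : V} (huv : G.Adj u v) :
    nbhdExcess G I u + nbhdExcess G I v ≤ 0 := by
  have hle {a b : V} (hab : G.Adj a b) :
      (I : Set V).indicator (1 : V → ℝ) a ≤ (nbhd G I : Set V).indicator 1 b := by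
    by_cases ha : a ∈ I
    · simp [ha, mem_nbhd_of_adj G ha hab]
    · simp [ha, Set.indicator_nonneg]
  have h₁ := hle huv
  have h₂ := hle huv.symm
  unfold nbhdExcess
  linarith

lemma isIndepSet_tpow_sum_nbhdExcess_pos (I : Finset V) (n : ℕ) :
    IsIndepSet (tpow G n) {x | 0 < ∑ i, nbhdExcess G I (x i)} := by
  intro x hx y hy hxy
  simp only [Finset.mem_filter_univ] at hx hy
  have : ∑ i, (nbhdExcess G I (x i) + nbhdExcess G I (y i)) ≤ 0 :=
    Finset.sum_nonpos fun i _ ↦ nbhdExcess_add_nonpos_of_adj G I (hxy.2 i)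
  rw [Finset.sum_add_distrib] at this
  linarith

lemma sum_mul_nbhdExcess (μ : V → ℝ) (I : Finset V) :
    ∑ v, μ v * nbhdExcess G I v = fmeas μ I - fmeas μ (nbhd G I) := by
  classical
  simp [nbhdExcess, mul_sub, Set.indicator_apply, Finset.sum_sub_distrib, fmeas]

end IndependentSets

section AlphaBar

variable {V : Type*} [Fintype V] (G : SimpleGraph V) (w : V → ℝ)

lemma fmeas_le_alphaBar {I : Finset V} (hI : IsIndepSet G I) : fmeas w I ≤ alphaBar G w :=
  le_csSup ((Set.finite_range (fmeas w)).bddAbove.mono (by rintro _ ⟨J, -, rfl⟩; exact ⟨J, rfl⟩))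
    ⟨I, hI, rfl⟩

lemma alphaBar_le_sum (hw : ∀ v, 0 ≤ w v) : alphaBar G w ≤ ∑ v, w v := by
  refine Real.sSup_le ?_ (Finset.sum_nonneg fun v _ ↦ hw v)
  rintro _ ⟨I, -, rfl⟩
  exact Finset.sum_le_sum_of_subset_of_nonneg (Finset.subset_univ I) fun v _ _ ↦ hw v

lemma alphaPow_le_one (μ : V → ℝ) (hμ0 : ∀ v, 0 ≤ μ v) (hμ1 : ∑ v, μ v = 1) (n : ℕ) :
    alphaPow G μ n ≤ 1 := by
  classical
  calc alphaPow G μ n ≤ ∑ x : Fin n → V, ∏ i, μ (x i) :=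
        alphaBar_le_sum _ _ fun x ↦ Finset.prod_nonneg fun i _ ↦ hμ0 (x i)
    _ = 1 := by rw [← Fintype.sum_pow, hμ1, one_pow]

end AlphaBar

section WeakLaw

variable {Ω : Type*} [MeasurableSpace Ω] (ν : Measure Ω) [IsProbabilityMeasure ν]
  {X : Ω → ℝ}

lemma measureReal_pi_sum_nonpos_le (hX : MemLp X 2 ν) (hm : 0 < ν[X]) {n : ℕ} (hn : 0 < n) :
    (Measure.pi fun _ : Fin n ↦ ν).real {x | ∑ i, X (x i) ≤ 0} ≤ Var[X; ν] / (n * ν[X] ^ 2) := by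
  set P := Measure.pi fun _ : Fin n ↦ ν
  set S : (Fin n → Ω) → ℝ := ∑ i, fun x ↦ X (x i) with hS
  have hS_apply (x : Fin n → Ω) : S x = ∑ i, X (x i) := by simp [hS]
  have hXi (i : Fin n) : MemLp (fun x : Fin n → Ω ↦ X (x i)) 2 P :=
    hX.comp_measurePreserving (measurePreserving_eval _ i)
  have hmean : ∫ x, S x ∂P = n * ν[X] := by
    simp_rw [hS_apply]
    rw [integral_finsetSum _ fun i _ ↦ (hXi i).integrable one_le_two,
      Finset.sum_congr rfl fun i _ ↦ integral_comp_eval (μ := fun _ : Fin n ↦ ν) (i := i)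
        hX.aestronglyMeasurable]
    simp
  have hvar : Var[S; P] = n * Var[X; ν] := by
    rw [hS, variance_sum_pi fun _ ↦ hX]
    simp
  have hc : 0 < (n : ℝ) * ν[X] := by positivity
  have hsub : {x | ∑ i, X (x i) ≤ 0} ⊆ {x | (n : ℝ) * ν[X] ≤ |S x - ∫ x, S x ∂P|} := by
    intro x (hx : ∑ i, X (x i) ≤ 0)
    rw [Set.mem_ofPred_eq, hmean, hS_apply, abs_sub_comm, abs_of_nonneg (by linarith)]
    linarith
  calc P.real {x | ∑ i, X (x i) ≤ 0}
      ≤ P.real {x | (n : ℝ) * ν[X] ≤ |S x - ∫ x, S x ∂P|} := measureReal_mono hsub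
    _ ≤ Var[S; P] / ((n : ℝ) * ν[X]) ^ 2 :=
        ENNReal.toReal_le_of_le_ofReal (div_nonneg (variance_nonneg _ _) (sq_nonneg _))
          (meas_ge_le_variance_div_sq (memLp_finsetSum' _ fun i _ ↦ hXi i) hc)
    _ = Var[X; ν] / (n * ν[X] ^ 2) := by
        rw [hvar]
        field_simp

theorem tendsto_measureReal_pi_sum_pos (hX : MemLp X 2 ν) (hm : 0 < ν[X]) :
    Tendsto (fun n : ℕ ↦ (Measure.pi fun _ : Fin n ↦ ν).real {x | 0 < ∑ i, X (x i)})
      atTop (nhds 1) := by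
  have hbound : Tendsto (fun n : ℕ ↦ 1 - Var[X; ν] / ν[X] ^ 2 / n) atTop (nhds 1) := by
    have := (tendsto_const_div_atTop_nhds_zero_nat (Var[X; ν] / ν[X] ^ 2)).const_sub (1 : ℝ)
    rwa [sub_zero] at this
  refine tendsto_of_tendsto_of_tendsto_of_le_of_le' hbound tendsto_const_nhds ?_
    (Eventually.of_forall fun n ↦ measureReal_le_one)
  filter_upwards [eventually_gt_atTop 0] with n hn
  have hunion : (Set.univ : Set (Fin n → Ω)) = {x | 0 < ∑ i, X (x i)} ∪ {x | ∑ i, X (x i) ≤ 0} := by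
    ext x; simp [lt_or_ge]
  have hcover := measureReal_union_le (μ := Measure.pi fun _ : Fin n ↦ ν)
    {x | 0 < ∑ i, X (x i)} {x | ∑ i, X (x i) ≤ 0}
  rw [← hunion, probReal_univ] at hcover
  have := measureReal_pi_sum_nonpos_le ν hX hm hn
  rw [div_div, mul_comm _ (n : ℝ)]
  linarith

end WeakLaw

section WeightMeasure

variable {V : Type*} [Fintype V] (μ : V → ℝ) (hμ0 : ∀ v, 0 ≤ μ v) (hμ1 : ∑ v, μ v = 1)

noncomputable def weightPMF : PMF V :=
  PMF.ofFintype (fun v ↦ ENNReal.ofReal (μ v)) <| by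
    rw [← ENNReal.ofReal_sum_of_nonneg fun v _ ↦ hμ0 v, hμ1, ENNReal.ofReal_one]

lemma weightPMF_toReal (v : V) : (weightPMF μ hμ0 hμ1 v).toReal = μ v :=
  ENNReal.toReal_ofReal (hμ0 v)

variable [MeasurableSpace V] [MeasurableSingletonClass V]

lemma integral_weightPMF (f : V → ℝ) :
    ∫ v, f v ∂(weightPMF μ hμ0 hμ1).toMeasure = ∑ v, μ v * f v := by
  simp [PMF.integral_eq_sum, weightPMF_toReal]

lemma measureReal_pi_weightPMF {n : ℕ} (S : Finset (Fin n → V)) :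
    (Measure.pi fun _ : Fin n ↦ (weightPMF μ hμ0 hμ1).toMeasure).real S = pmeas μ n S := by
  rw [← sum_measureReal_singleton, pmeas]
  refine Finset.sum_congr rfl fun x _ ↦ ?_
  rw [measureReal_def, Measure.pi_singleton, ENNReal.toReal_prod]
  simp_rw [PMF.toMeasure_apply_singleton _ _ (measurableSet_singleton _), weightPMF_toReal]

end WeightMeasure

theorem stmt_2 {V : Type*} [Fintype V] (G : SimpleGraph V) (μ : V → ℝ)
    (hμ0 : ∀ v, 0 ≤ μ v) (hμ1 : ∑ v, μ v = 1)
    (hI : ∃ I : Finset V, IsIndepSet G I ∧ fmeas μ I > fmeas μ (nbhd G I)) :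
    Tendsto (fun n => alphaPow G μ n) atTop (nhds 1) := by
  obtain ⟨I, -, hI⟩ := hI
  let : MeasurableSpace V := ⊤
  set ν := (weightPMF μ hμ0 hμ1).toMeasure
  have hmean : 0 < ν[nbhdExcess G I] := by
    rw [integral_weightPMF, sum_mul_nbhdExcess]
    linarith
  refine tendsto_of_tendsto_of_tendsto_of_le_of_le
    (tendsto_measureReal_pi_sum_pos ν MemLp.of_discrete hmean) tendsto_const_nhds (fun n ↦ ?_)
    (alphaPow_le_one G μ hμ0 hμ1)
  rw [← Finset.coe_filter_univ, measureReal_pi_weightPMF]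
  exact fmeas_le_alphaBar _ _ (isIndepSet_tpow_sum_nbhdExcess_pos G I n)
end

section
/- Let G be a finite bipartite graph with at least one edge and probability weights μ. Then ᾱ(G^n) ≥ 1/2 for every n, where ᾱ(G^n) is the maximum product measure of an independent set in the tensor power G^n; consequently lim_{n→∞} ᾱ(G^n) ∈ {1/2, 1}. -/
/-!
Over a bipartition `(X, Y)` of `G`, the cylinders `{x | x 0 ∈ X}` and `{x | x 0 ∈ Y}` are
independent in `Gⁿ` and their product measures add up to `1`, so one of them has measure at
least `1/2`.

If `I` is independent in `Gⁿ` with measure `a`, the tuples of `(Gⁿ)³ ≅ G³ⁿ` with at least two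
of their three blocks in `I` form an independent set (two adjacent tuples have disjoint sets of
blocks in `I`) of measure `3a² - 2a³`. Hence the limit `L ∈ [1/2, 1]` satisfies
`3L² - 2L³ ≤ L`, i.e. `L (2L - 1) (1 - L) ≤ 0`, which forces `L = 1/2` or `L = 1`.
-/

open Finset Filter

section alphaBar

variable {W : Type*} [Fintype W] (G : SimpleGraph W) (ν : W → ℝ)

lemma finite_fmeas_isIndepSet :
    {x : ℝ | ∃ I : Finset W, IsIndepSet G I ∧ x = fmeas ν I}.Finite :=
  (Set.finite_range (fmeas ν)).subset fun _ ⟨I, _, hx⟩ => ⟨I, hx.symm⟩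

lemma le_alphaBar {I : Finset W} (hI : IsIndepSet G I) : fmeas ν I ≤ alphaBar G ν :=
  le_csSup (finite_fmeas_isIndepSet G ν).bddAbove ⟨I, hI, rfl⟩

lemma exists_isIndepSet_fmeas_eq_alphaBar :
    ∃ I : Finset W, IsIndepSet G I ∧ fmeas ν I = alphaBar G ν := by
  have hempty : IsIndepSet G ∅ := fun _ h => absurd h (notMem_empty _)
  have hne : {x : ℝ | ∃ I : Finset W, IsIndepSet G I ∧ x = fmeas ν I}.Nonempty :=
    ⟨fmeas ν ∅, ∅, hempty, rfl⟩
  obtain ⟨I, hI, h⟩ := hne.csSup_mem (finite_fmeas_isIndepSet G ν)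
  exact ⟨I, hI, h.symm⟩

lemma alphaBar_le_one (hν0 : ∀ w, 0 ≤ ν w) (hν1 : ∑ w, ν w = 1) : alphaBar G ν ≤ 1 := by
  obtain ⟨I, -, hI⟩ := exists_isIndepSet_fmeas_eq_alphaBar G ν
  rw [← hI, ← hν1]
  exact sum_le_univ_sum_of_nonneg hν0

lemma one_half_le_alphaBar_of_partition [DecidableEq W] (hν1 : ∑ w, ν w = 1) {A B : Finset W}
    (hA : IsIndepSet G A) (hB : IsIndepSet G B) (hAB : Disjoint A B) (hcover : A ∪ B = univ) :
    1 / 2 ≤ alphaBar G ν := by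
  have hsum : fmeas ν A + fmeas ν B = 1 := by
    rw [fmeas, fmeas, ← sum_union hAB, hcover, hν1]
  linarith [le_alphaBar G ν hA, le_alphaBar G ν hB]

lemma alphaBar_le_of_equiv {W' : Type*} [Fintype W'] {G' : SimpleGraph W'} {ν' : W' → ℝ}
    (e : W ≃ W') (he : ∀ u v, G.Adj u v → G'.Adj (e u) (e v)) (hν : ∀ w, ν' (e w) = ν w) :
    alphaBar G' ν' ≤ alphaBar G ν := by
  obtain ⟨J, hJ, hJν⟩ := exists_isIndepSet_fmeas_eq_alphaBar G' ν'
  have hind : IsIndepSet G (J.map e.symm.toEmbedding) := by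
    simp only [IsIndepSet, mem_map_equiv, Equiv.symm_symm]
    exact fun u hu v hv huv => hJ _ hu _ hv (he u v huv)
  have hmeas : fmeas ν (J.map e.symm.toEmbedding) = fmeas ν' J := by
    simp only [fmeas, sum_map, Equiv.coe_toEmbedding, ← hν, Equiv.apply_symm_apply]
  exact hJν ▸ hmeas ▸ le_alphaBar G ν hind

end alphaBar

lemma isIndepSet_of_bipartition {V : Type*} {G : SimpleGraph V} {X Y : Finset V}
    (hXY : Disjoint X Y) (hbip : ∀ u v, G.Adj u v → (u ∈ X ∧ v ∈ Y) ∨ (u ∈ Y ∧ v ∈ X)) :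
    IsIndepSet G X ∧ IsIndepSet G Y := by
  constructor <;> intro u hu v hv huv <;> rcases hbip u v huv with ⟨h₁, h₂⟩ | ⟨h₁, h₂⟩
  exacts [disjoint_left.1 hXY hv h₂, disjoint_left.1 hXY hu h₁, disjoint_left.1 hXY h₁ hu,
    disjoint_left.1 hXY h₂ hv]

section TensorPower

variable {V : Type*} [Fintype V] {G : SimpleGraph V} {μ : V → ℝ}

lemma sum_prod_eq_one (hμ1 : ∑ v, μ v = 1) (ι : Type*) [Fintype ι] [DecidableEq ι] :
    ∑ x : ι → V, ∏ i, μ (x i) = 1 := by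
  rw [← Fintype.prod_sum (fun _ v => μ v), hμ1, prod_const_one]

lemma IsIndepSet.filter_apply_mem {P : Finset V} [DecidableEq V] (hP : IsIndepSet G P) {n : ℕ}
    (i : Fin n) : IsIndepSet (tpow G n) {x | x i ∈ P} := by
  intro x hx y hy hxy
  exact hP _ (mem_filter.1 hx).2 _ (mem_filter.1 hy).2 (hxy.2 i)

lemma one_half_le_alphaPow [DecidableEq V] (hμ1 : ∑ v, μ v = 1) {X Y : Finset V}
    (hX : IsIndepSet G X) (hY : IsIndepSet G Y) (hXY : Disjoint X Y) (hcover : X ∪ Y = univ)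
    (n : ℕ) : 1 / 2 ≤ alphaPow G μ n := by
  cases n with
  | zero =>
    have hind : ∀ S : Finset (Fin 0 → V), IsIndepSet (tpow G 0) S :=
      fun _ u _ v _ huv => huv.1 (Subsingleton.elim u v)
    exact one_half_le_alphaBar_of_partition _ _ (sum_prod_eq_one hμ1 (Fin 0)) (hind univ)
      (hind ∅) (disjoint_empty_right _) (union_empty _)
  | succ m =>
    refine one_half_le_alphaBar_of_partition _ _ (sum_prod_eq_one hμ1 (Fin (m + 1)))
      (hX.filter_apply_mem 0) (hY.filter_apply_mem 0)
      (disjoint_filter.2 fun _ _ h => disjoint_left.1 hXY h) ?_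
    rw [← filter_or]
    exact filter_true_of_mem fun x _ => mem_union.1 (hcover ▸ mem_univ (x 0))

end TensorPower

section Majority

variable {W : Type*} [Fintype W]

lemma sum_prod_fin_three (f g h : W → ℝ) :
    ∑ x : Fin 3 → W, f (x 0) * g (x 1) * h (x 2) = (∑ w, f w) * (∑ w, g w) * ∑ w, h w := by
  simpa [Fin.prod_univ_three] using (Fintype.prod_sum ![f, g, h]).symm

variable [DecidableEq W]

def majoritySet (I : Finset W) : Finset (Fin 3 → W) := {x | 2 ≤ #{j | x j ∈ I}}

lemma IsIndepSet.majoritySet {G : SimpleGraph W} {I : Finset W} (hI : IsIndepSet G I) :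
    IsIndepSet (tpow G 3) (majoritySet I) := by
  intro x hx y hy hxy
  have hdisj : Disjoint ({j | x j ∈ I} : Finset (Fin 3)) ({j | y j ∈ I} : Finset (Fin 3)) :=
    disjoint_filter.2 fun j _ hxj hyj => hI _ hxj _ hyj (hxy.2 j)
  have hcard := (card_union_of_disjoint hdisj).symm.trans_le (card_le_univ _)
  rw [Fintype.card_fin] at hcard
  have hx' := (mem_filter.1 hx).2
  have hy' := (mem_filter.1 hy).2
  omega

lemma fmeas_majoritySet {ν : W → ℝ} (hν1 : ∑ w, ν w = 1) (I : Finset W) :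
    fmeas (fun x : Fin 3 → W => ∏ j, ν (x j)) (majoritySet I) =
      3 * fmeas ν I ^ 2 - 2 * fmeas ν I ^ 3 := by
  set c : W → ℝ := fun w => if w ∈ I then ν w else 0
  have hc : ∑ w, c w = fmeas ν I := by rw [sum_ite_mem, univ_inter, fmeas]
  have hpoint : ∀ x : Fin 3 → W, (if 2 ≤ #{j | x j ∈ I} then ∏ j, ν (x j) else 0) =
      c (x 0) * c (x 1) * ν (x 2) + c (x 0) * ν (x 1) * c (x 2) + ν (x 0) * c (x 1) * c (x 2)
        - 2 * (c (x 0) * c (x 1) * c (x 2)) := by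
    intro x
    rw [card_filter, Fin.sum_univ_three, Fin.prod_univ_three]
    by_cases h0 : x 0 ∈ I <;> by_cases h1 : x 1 ∈ I <;> by_cases h2 : x 2 ∈ I <;>
      simp [c, h0, h1, h2]
    ring
  rw [fmeas, majoritySet, sum_filter, Fintype.sum_congr _ _ hpoint, sum_sub_distrib,
    sum_add_distrib, sum_add_distrib, ← mul_sum, sum_prod_fin_three, sum_prod_fin_three,
    sum_prod_fin_three, sum_prod_fin_three, hc, hν1]
  ring

end Majority

section Blocks

variable {V : Type*} (m n : ℕ)

def blockEquiv : (Fin (m * n) → V) ≃ (Fin m → Fin n → V) :=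
  (finProdFinEquiv.arrowCongr (Equiv.refl V)).symm.trans (Equiv.curry _ _ _)

lemma tpow_adj_blockEquiv {G : SimpleGraph V} {x y : Fin (m * n) → V}
    (hxy : (tpow G (m * n)).Adj x y) :
    (tpow (tpow G n) m).Adj (blockEquiv m n x) (blockEquiv m n y) := by
  obtain ⟨hne, hadj⟩ := hxy
  refine ⟨(blockEquiv m n).injective.ne hne, fun j => ⟨fun hj => ?_, fun i => hadj _⟩⟩
  -- by `hj`, adjacency at a coordinate `(j, i)` is a loop, and every `t` supplies such an `i`
  exact hne (funext fun t =>
    ((hadj (finProdFinEquiv (j, (finProdFinEquiv.symm t).2))).ne (congrFun hj _)).elim)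

lemma prod_blockEquiv (μ : V → ℝ) (x : Fin (m * n) → V) :
    ∏ j, ∏ i, μ (blockEquiv m n x j i) = ∏ t, μ (x t) := by
  rw [← Fintype.prod_prod_type']
  exact Fintype.prod_equiv finProdFinEquiv _ _ fun _ => rfl

lemma alphaBar_tpow_tpow_le_alphaPow (G : SimpleGraph V) (μ : V → ℝ) [Fintype V] :
    alphaBar (tpow (tpow G n) m) (fun X => ∏ j, ∏ i, μ (X j i)) ≤ alphaPow G μ (m * n) :=
  alphaBar_le_of_equiv _ _ (blockEquiv m n) (fun _ _ => tpow_adj_blockEquiv m n)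
    (prod_blockEquiv m n μ)

end Blocks

lemma majority_le_alphaPow {V : Type*} [Fintype V] [DecidableEq V] (G : SimpleGraph V)
    {μ : V → ℝ} (hμ1 : ∑ v, μ v = 1) (n : ℕ) :
    3 * alphaPow G μ n ^ 2 - 2 * alphaPow G μ n ^ 3 ≤ alphaPow G μ (3 * n) := by
  obtain ⟨I, hI, hIμ⟩ := exists_isIndepSet_fmeas_eq_alphaBar (tpow G n) (fun x => ∏ i, μ (x i))
  calc 3 * alphaPow G μ n ^ 2 - 2 * alphaPow G μ n ^ 3
      = fmeas (fun X : Fin 3 → Fin n → V => ∏ j, ∏ i, μ (X j i)) (majoritySet I) := by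
        rw [fmeas_majoritySet (sum_prod_eq_one hμ1 (Fin n)), hIμ, alphaPow]
    _ ≤ alphaBar (tpow (tpow G n) 3) (fun X => ∏ j, ∏ i, μ (X j i)) :=
        le_alphaBar _ _ hI.majoritySet
    _ ≤ alphaPow G μ (3 * n) := alphaBar_tpow_tpow_le_alphaPow 3 n G μ

lemma eq_one_half_or_eq_one_of_majority_le {L : ℝ} (h₁ : 1 / 2 ≤ L) (h₂ : L ≤ 1)
    (h : 3 * L ^ 2 - 2 * L ^ 3 ≤ L) : L = 1 / 2 ∨ L = 1 := by
  by_contra! hL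
  have hpos : 0 < L * (2 * L - 1) * (1 - L) := by
    have := lt_of_le_of_ne h₁ hL.1.symm
    have := lt_of_le_of_ne h₂ hL.2
    apply mul_pos (mul_pos _ _) <;> linarith
  nlinarith

theorem stmt_6_general {V : Type*} [Fintype V] [DecidableEq V] (G : SimpleGraph V) (μ : V → ℝ)
    (hμ0 : ∀ v, 0 ≤ μ v) (hμ1 : ∑ v, μ v = 1)
    (X Y : Finset V) (hXY : Disjoint X Y) (hcover : X ∪ Y = Finset.univ)
    (hbip : ∀ u v, G.Adj u v → (u ∈ X ∧ v ∈ Y) ∨ (u ∈ Y ∧ v ∈ X)) :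
    (∀ n : ℕ, 1 / 2 ≤ alphaPow G μ n) ∧
    (∀ L : ℝ, Tendsto (fun n => alphaPow G μ n) atTop (nhds L) →
      L = 1 / 2 ∨ L = 1) := by
  obtain ⟨hX, hY⟩ := isIndepSet_of_bipartition hXY hbip
  have half : ∀ n, 1 / 2 ≤ alphaPow G μ n := one_half_le_alphaPow hμ1 hX hY hXY hcover
  refine ⟨half, fun L hL => ?_⟩
  have le_one : ∀ n, alphaPow G μ n ≤ 1 := fun n =>
    alphaBar_le_one _ _ (fun _ => prod_nonneg fun _ _ => hμ0 _) (sum_prod_eq_one hμ1 (Fin n))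
  have hL₃ : Tendsto (fun n => alphaPow G μ (3 * n)) atTop (nhds L) :=
    hL.comp (tendsto_id.const_mul_atTop' (by norm_num))
  have hmaj : Tendsto (fun n => 3 * alphaPow G μ n ^ 2 - 2 * alphaPow G μ n ^ 3) atTop
      (nhds (3 * L ^ 2 - 2 * L ^ 3)) :=
    ((hL.pow 2).const_mul 3).sub ((hL.pow 3).const_mul 2)
  exact eq_one_half_or_eq_one_of_majority_le (ge_of_tendsto' hL half) (le_of_tendsto' hL le_one)
    (le_of_tendsto_of_tendsto' hmaj hL₃ (majority_le_alphaPow G hμ1))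

theorem stmt_6 {V : Type*} [Fintype V] [DecidableEq V] (G : SimpleGraph V) (μ : V → ℝ)
    (hμ0 : ∀ v, 0 ≤ μ v) (hμ1 : ∑ v, μ v = 1)
    (X Y : Finset V) (hXY : Disjoint X Y) (hcover : X ∪ Y = Finset.univ)
    (hbip : ∀ u v, G.Adj u v → (u ∈ X ∧ v ∈ Y) ∨ (u ∈ Y ∧ v ∈ X))
    (hedge : ∃ u v, G.Adj u v) :
    (∀ n : ℕ, 1 / 2 ≤ alphaPow G μ n) ∧
    (∀ L : ℝ, Tendsto (fun n => alphaPow G μ n) atTop (nhds L) →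
      L = 1 / 2 ∨ L = 1) :=
  stmt_6_general G μ hμ0 hμ1 X Y hXY hcover hbip
end

section
/- Let G be a finite graph with rational probability weights μ. If there is an independent set J in some tensor power G^k with μ^{⊗k}(J) > 1/2, then there exists an independent set I in G itself with μ(I) > μ(N(I)). -/
open Finset Filter

/-!
If no independent set `I` has `μ(I) > μ(N(I))`, then Hall's condition `μ(A) ≤ μ(N(A))` holds for
every `A` (apply the assumption to the independent set `A \ N(A)`, whose neighbourhood avoids `A`).
For rational weights, Hall's marriage theorem on a blow-up of `G` then yields a coupling of `μ`
with itself carried by the edges of `G`. Its `k`-th tensor power is a coupling of `μ^{⊗k}` carried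
by the edges of `G^k`, and such a coupling moves all the mass of an independent set `J` into `Jᶜ`,
so `μ^{⊗k}(J) ≤ 1/2`.
-/

section

variable {V : Type*} [Fintype V] {G : SimpleGraph V}

@[simp]
theorem mem_nbhd {I : Finset V} {v : V} : v ∈ nbhd G I ↔ ∃ u ∈ I, G.Adj u v := by
  simp [nbhd]

theorem nbhd_mono {A B : Finset V} (h : A ⊆ B) : nbhd G A ⊆ nbhd G B := fun v hv => by
  obtain ⟨u, hu, huv⟩ := mem_nbhd.mp hv
  exact mem_nbhd.mpr ⟨u, h hu, huv⟩

theorem fmeas_le_fmeas_nbhd {μ : V → ℝ} (hμ0 : ∀ v, 0 ≤ μ v)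
    (h : ∀ I, IsIndepSet G I → fmeas μ I ≤ fmeas μ (nbhd G I)) (A : Finset V) :
    fmeas μ A ≤ fmeas μ (nbhd G A) := by
  classical
  set I := A \ nbhd G A
  have hI : IsIndepSet G I := fun u hu v hv huv =>
    (mem_sdiff.mp hv).2 (mem_nbhd.mpr ⟨u, (mem_sdiff.mp hu).1, huv⟩)
  have hNI : nbhd G I ⊆ nbhd G A \ A := fun v hv => by
    obtain ⟨u, hu, huv⟩ := mem_nbhd.mp hv
    refine mem_sdiff.mpr ⟨nbhd_mono sdiff_subset hv, fun hvA => ?_⟩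
    exact (mem_sdiff.mp hu).2 (mem_nbhd.mpr ⟨v, hvA, huv.symm⟩)
  have hsplitA := sum_inter_add_sum_sdiff A (nbhd G A) μ
  have hsplitN := sum_inter_add_sum_sdiff (nbhd G A) A μ
  have hIN : fmeas μ (nbhd G I) ≤ fmeas μ (nbhd G A \ A) :=
    sum_le_sum_of_subset_of_nonneg hNI fun v _ _ => hμ0 v
  rw [inter_comm] at hsplitN
  unfold fmeas at *
  linarith [h I hI]

/-- A coupling of `μ` with itself carried by the edges of `G`, i.e. a fractional perfect matching
of the bipartite double cover of `G` with vertex weights `μ`. -/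
structure EdgeCoupling (G : SimpleGraph V) (μ : V → ℝ) where
  w : V → V → ℝ
  nonneg : ∀ u v, 0 ≤ w u v
  adj_of_ne_zero : ∀ u v, w u v ≠ 0 → G.Adj u v
  sum_right : ∀ u, ∑ v, w u v = μ u
  sum_left : ∀ v, ∑ u, w u v = μ v

namespace EdgeCoupling

variable {μ : V → ℝ}

/-- The coupling read off a permutation `e` of a blow-up `p : α → V` of the vertices in which
every point is sent to a neighbour; each point carries mass `c`. -/
def ofEquiv [DecidableEq V] {α : Type*} [Fintype α] (p : α → V) (e : α ≃ α)
    (he : ∀ x, G.Adj (p x) (p (e x))) (c : ℝ) (hc : 0 ≤ c)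
    (hμ : ∀ v, μ v = c * #{x | p x = v}) : EdgeCoupling G μ where
  w u v := c * #{x | p x = u ∧ p (e x) = v}
  nonneg u v := by positivity
  adj_of_ne_zero u v h := by
    obtain ⟨x, hx⟩ := card_ne_zero.mp (right_ne_zero_of_mul h ∘ Nat.cast_eq_zero.mpr)
    obtain ⟨rfl, rfl⟩ := (mem_filter.mp hx).2
    exact he x
  sum_right u := by
    rw [hμ, ← mul_sum, ← Nat.cast_sum, card_eq_sum_card_fiberwise (s := {x | p x = u})
      (f := fun x => p (e x)) (t := univ) fun _ _ => mem_univ _]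
    simp_rw [filter_filter]
  sum_left v := by
    rw [hμ, ← mul_sum, ← Nat.cast_sum, ← card_equiv e (s := {x | p (e x) = v}) (by simp),
      card_eq_sum_card_fiberwise (f := p) (t := univ) fun _ _ => mem_univ _]
    simp_rw [filter_filter, and_comm]

/-- `0 < k` is needed: `tpow G 0` has no edges, yet the empty product gives its point mass `1`. -/
def tpow (c : EdgeCoupling G μ) {k : ℕ} (hk : 0 < k) :
    EdgeCoupling (tpow G k) (fun x => ∏ i, μ (x i)) where
  w x y := ∏ i, c.w (x i) (y i)
  nonneg x y := prod_nonneg fun i _ => c.nonneg _ _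
  adj_of_ne_zero x y h := by
    have hadj i : G.Adj (x i) (y i) :=
      c.adj_of_ne_zero _ _ fun h0 => h (prod_eq_zero (mem_univ i) h0)
    exact ⟨fun hxy => (hxy ▸ hadj ⟨0, hk⟩).ne rfl, hadj⟩
  sum_right x := by
    classical
    rw [← Fintype.prod_sum fun i v => c.w (x i) v]
    exact prod_congr rfl fun i _ => c.sum_right (x i)
  sum_left y := by
    classical
    rw [← Fintype.prod_sum fun i u => c.w u (y i)]
    exact prod_congr rfl fun i _ => c.sum_left (y i)

theorem w_eq_zero (c : EdgeCoupling G μ) {J : Finset V} (hJ : IsIndepSet G J) {u v : V}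
    (hu : u ∈ J) (hv : v ∈ J) : c.w u v = 0 := by
  by_contra h
  exact hJ u hu v hv (c.adj_of_ne_zero u v h)

/-- All the mass leaving an independent set `J` lands in `Jᶜ`. -/
theorem fmeas_le_fmeas_compl [DecidableEq V] (c : EdgeCoupling G μ) {J : Finset V}
    (hJ : IsIndepSet G J) : fmeas μ J ≤ fmeas μ Jᶜ :=
  calc fmeas μ J = ∑ u ∈ J, ∑ v ∈ Jᶜ, c.w u v := by
        refine sum_congr rfl fun u hu => ?_
        rw [← c.sum_right, ← sum_compl_add_sum J, sum_eq_zero fun v hv => c.w_eq_zero hJ hu hv,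
          add_zero]
    _ = ∑ v ∈ Jᶜ, ∑ u ∈ J, c.w u v := sum_comm
    _ ≤ ∑ v ∈ Jᶜ, ∑ u, c.w u v :=
        sum_le_sum fun v _ => sum_le_sum_of_subset_of_nonneg (subset_univ J)
          fun u _ _ => c.nonneg u v
    _ = fmeas μ Jᶜ := sum_congr rfl fun v _ => c.sum_left v

end EdgeCoupling

theorem exists_nat_mul_eq_of_rat {μ : V → ℝ} (hμ0 : ∀ v, 0 ≤ μ v)
    (hrat : ∀ v, ∃ q : ℚ, μ v = q) : ∃ D : ℕ, 0 < D ∧ ∀ v, ∃ n : ℕ, μ v * D = n := by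
  choose q hq using hrat
  refine ⟨∏ v, (q v).den, prod_pos fun v _ => (q v).pos, fun v => ?_⟩
  obtain ⟨m, hm⟩ := dvd_prod_of_mem (fun v => (q v).den) (mem_univ v)
  have hnum : 0 ≤ (q v).num := Rat.num_nonneg.mpr (by exact_mod_cast hq v ▸ hμ0 v)
  refine ⟨(q v).num.toNat * m, ?_⟩
  have hcast : ((q v).num.toNat : ℝ) = (q v).num := by exact_mod_cast Int.toNat_of_nonneg hnum
  rw [hm, hq v, Nat.cast_mul, Nat.cast_mul, hcast, ← mul_assoc]
  exact_mod_cast congrArg (· * (m : ℚ)) (Rat.mul_den_eq_num (q v))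

/-- Hall's marriage theorem on the blow-up of `G` in which `v` is replaced by `a v` copies. -/
theorem exists_equiv_adj_of_hall (a : V → ℕ)
    (hall : ∀ A : Finset V, ∑ v ∈ A, a v ≤ ∑ v ∈ nbhd G A, a v) :
    ∃ e : (Σ v, Fin (a v)) ≃ (Σ v, Fin (a v)), ∀ x, G.Adj x.1 (e x).1 := by
  classical
  let t : (Σ v, Fin (a v)) → Finset (Σ v, Fin (a v)) := fun x => {y | G.Adj x.1 y.1}
  have hcard : ∀ s, #s ≤ #(s.biUnion t) := by
    intro s
    have hbi : s.biUnion t = (nbhd G (s.image Sigma.fst)).sigma fun _ => univ := by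
      ext y
      simp [t]
    calc #s ≤ #((s.image Sigma.fst).sigma fun v => (univ : Finset (Fin (a v)))) :=
          card_le_card fun x hx => mem_sigma.mpr ⟨mem_image_of_mem _ hx, mem_univ _⟩
      _ ≤ #(s.biUnion t) := by simpa [hbi, card_sigma] using hall (s.image Sigma.fst)
  obtain ⟨f, hf, hft⟩ := (all_card_le_biUnion_card_iff_exists_injective t).mp hcard
  exact ⟨Equiv.ofBijective f (Finite.injective_iff_bijective.mp hf),
    fun x => by simpa [t] using hft x⟩

/-- Fractional Hall theorem for rational weights, by clearing denominators. -/
theorem exists_edgeCoupling_of_hall {μ : V → ℝ} (hμ0 : ∀ v, 0 ≤ μ v)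
    (hrat : ∀ v, ∃ q : ℚ, μ v = q) (hall : ∀ A, fmeas μ A ≤ fmeas μ (nbhd G A)) :
    Nonempty (EdgeCoupling G μ) := by
  classical
  obtain ⟨D, hD, ha⟩ := exists_nat_mul_eq_of_rat hμ0 hrat
  choose a ha using ha
  have hallNat (A : Finset V) : ∑ v ∈ A, a v ≤ ∑ v ∈ nbhd G A, a v := by
    have h := mul_le_mul_of_nonneg_right (hall A) (Nat.cast_nonneg D)
    simp only [fmeas, sum_mul, ha] at h
    exact_mod_cast h
  obtain ⟨e, he⟩ := exists_equiv_adj_of_hall a hallNat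
  refine ⟨EdgeCoupling.ofEquiv Sigma.fst e he (D : ℝ)⁻¹ (by positivity) fun v => ?_⟩
  have hfib : #{x : Σ v, Fin (a v) | x.1 = v} = a v := by
    rw [card_filter, ← univ_sigma_univ, sum_sigma]
    simp [apply_ite card]
  rw [hfib, ← ha, mul_comm, mul_inv_cancel_right₀ (by positivity)]

theorem pmeas_add_pmeas_compl [DecidableEq V] {μ : V → ℝ} (hμ1 : ∑ v, μ v = 1) (k : ℕ)
    (J : Finset (Fin k → V)) : pmeas μ k J + pmeas μ k Jᶜ = 1 := by
  rw [pmeas, pmeas, sum_add_sum_compl, ← Fintype.prod_sum fun _ v => μ v, hμ1, prod_const_one]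

end

theorem stmt_10 {V : Type*} [Fintype V] (G : SimpleGraph V) (μ : V → ℝ)
    (hμ0 : ∀ v, 0 ≤ μ v) (hμ1 : ∑ v, μ v = 1)
    (hrat : ∀ v, ∃ q : ℚ, μ v = (q : ℝ))
    (k : ℕ) (hk : 1 ≤ k) (J : Finset (Fin k → V))
    (hJ : IsIndepSet (tpow G k) J) (hJm : 1 / 2 < pmeas μ k J) :
    ∃ I : Finset V, IsIndepSet G I ∧ fmeas μ I > fmeas μ (nbhd G I) := by
  classical
  by_contra! hnone
  obtain ⟨c⟩ := exists_edgeCoupling_of_hall hμ0 hrat (fmeas_le_fmeas_nbhd hμ0 hnone)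
  have hcompl : pmeas μ k J ≤ pmeas μ k Jᶜ := (c.tpow hk).fmeas_le_fmeas_compl hJ
  linarith [pmeas_add_pmeas_compl hμ1 k J]
end
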